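/- Let (Ω, ℱ, P) be a probability space, let m = s²·n for positive integers s and n, and let x, y : Ω → ℝᵐ be square-integrable random vectors with E[x | σ(y)] = y almost surely and Var(xⱼ | σ(y)) ≤ 1 almost surely for every coordinate j ∈ {1,…,m}. Let f : ℝᵐ → ℝᵐ be a measurable function with f∘x square-integrable. Let 𝒥 be a nonempty finite family of subsets of {1,…,m}, each of cardinality n = m/s², such that every index j ∈ {1,…,m} belongs to exactly |𝒥|/s² members of 𝒥. For each J ∈ 𝒥, let g^J : Ω → ℝᴶ be a square-integrable random vector such that Cov(g^J_j, x_j | σ(y)) = 0 almost surely for every j ∈ J. Then E‖f(x) − y‖² + E‖x − y‖² ≤ E‖f(x) − x‖² + 2·√(m·s²) · (1/|𝒥|) · Σ_{J∈𝒥} ( E[ Σ_{j∈J} (f(x)_j − g^J_j)² ] )^{1/2}. -/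

import Mathlib

open MeasureTheory Finset

/-- Conditional expectation `E[f | 𝒢]` under measure `μ` (ambient σ-algebra `mΩ`). -/
noncomputable def condExpect {Ω : Type*} {mΩ : MeasurableSpace Ω} (𝒢 : MeasurableSpace Ω)
    (μ : @Measure Ω mΩ) {E : Type*} [NormedAddCommGroup E] [NormedSpace ℝ E] [CompleteSpace E]
    (f : Ω → E) : Ω → E :=
  @MeasureTheory.condExp Ω E 𝒢 mΩ _ _ μ f

/-- Conditional covariance of two real random variables given a sub-σ-algebra `𝒢`:
`Cov(U, V | 𝒢) = E[U·V | 𝒢] − E[U | 𝒢]·E[V | 𝒢]`. -/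
noncomputable def condCov {Ω : Type*} {mΩ : MeasurableSpace Ω} (𝒢 : MeasurableSpace Ω)
    (μ : @Measure Ω mΩ) (U V : Ω → ℝ) : Ω → ℝ :=
  fun ω => condExpect 𝒢 μ (fun ω' => U ω' * V ω') ω
    - condExpect 𝒢 μ U ω * condExpect 𝒢 μ V ω

/-- Conditional variance: `Var(U | 𝒢) = Cov(U, U | 𝒢)`. -/
noncomputable def condVar {Ω : Type*} {mΩ : MeasurableSpace Ω} (𝒢 : MeasurableSpace Ω)
    (μ : @Measure Ω mΩ) (U : Ω → ℝ) : Ω → ℝ :=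
  condCov 𝒢 μ U U

/-!
Write `ε = x − y`. Polarization gives
`E‖f(x) − y‖² + E‖ε‖² = E‖f(x) − x‖² + 2 ∑ⱼ E[(f(x)ⱼ − yⱼ) εⱼ]`, so everything hinges on the
cross terms. Since `E[εⱼ | σ(y)] = 0` and `gᴶⱼ` is conditionally uncorrelated with `xⱼ`, the
variable `gᴶⱼ − yⱼ` is orthogonal to `εⱼ` in `L²`; hence, for every `J ∋ j`,
`E[(f(x)ⱼ − yⱼ) εⱼ] = E[(f(x)ⱼ − gᴶⱼ) εⱼ] ≤ ‖f(x)ⱼ − gᴶⱼ‖₂ ‖εⱼ‖₂ ≤ ‖f(x)ⱼ − gᴶⱼ‖₂`,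
because `E εⱼ² = E Var(xⱼ | σ(y)) ≤ 1`. Averaging these bounds over the cover `𝒥`, in which
every index occurs `|𝒥|/s²` times, and applying Cauchy–Schwarz over the `n` indices of each `J`
produces the factor `s² √n = √(m s²)`.
-/

section

variable {Ω : Type*} {𝒢 : MeasurableSpace Ω} [mΩ : MeasurableSpace Ω] {P : Measure Ω}

theorem integral_mul_eq_inner_toLp {u v : Ω → ℝ} (hu : MemLp u 2 P) (hv : MemLp v 2 P) :
    ∫ ω, u ω * v ω ∂P = inner ℝ (hu.toLp u) (hv.toLp v) := by
  rw [L2.inner_def]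
  refine integral_congr_ae ?_
  filter_upwards [hu.coeFn_toLp, hv.coeFn_toLp] with ω hu' hv'
  simp [hu', hv', mul_comm]

theorem sq_integral_mul_le {u v : Ω → ℝ} (hu : MemLp u 2 P) (hv : MemLp v 2 P) :
    (∫ ω, u ω * v ω ∂P) ^ 2 ≤ (∫ ω, u ω ^ 2 ∂P) * ∫ ω, v ω ^ 2 ∂P := by
  simp only [sq, integral_mul_eq_inner_toLp hu hv, integral_mul_eq_inner_toLp hu hu,
    integral_mul_eq_inner_toLp hv hv]
  exact real_inner_mul_inner_self_le _ _

theorem integral_mul_le_sqrt_mul_sqrt {u v : Ω → ℝ} (hu : MemLp u 2 P) (hv : MemLp v 2 P) :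
    ∫ ω, u ω * v ω ∂P ≤ √(∫ ω, u ω ^ 2 ∂P) * √(∫ ω, v ω ^ 2 ∂P) := by
  rw [← Real.sqrt_mul (integral_nonneg fun ω => sq_nonneg (u ω))]
  exact (le_abs_self _).trans (Real.abs_le_sqrt (sq_integral_mul_le hu hv))

theorem integral_norm_sub_sq_add_integral_norm_sub_sq {E : Type*} [NormedAddCommGroup E]
    [InnerProductSpace ℝ E] {a b c : Ω → E} (ha : MemLp a 2 P) (hb : MemLp b 2 P)
    (hc : MemLp c 2 P) :
    ∫ ω, ‖a ω - c ω‖ ^ 2 ∂P + ∫ ω, ‖b ω - c ω‖ ^ 2 ∂P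
      = ∫ ω, ‖a ω - b ω‖ ^ 2 ∂P + 2 * ∫ ω, inner ℝ (a ω - c ω) (b ω - c ω) ∂P := by
  have hsq : ∀ {w : Ω → E}, MemLp w 2 P → Integrable (fun ω => ‖w ω‖ ^ 2) P :=
    fun hw => (memLp_two_iff_integrable_sq_norm hw.1).1 hw
  have hac : Integrable (fun ω => ‖a ω - c ω‖ ^ 2) P := hsq (ha.sub hc)
  have hbc : Integrable (fun ω => ‖b ω - c ω‖ ^ 2) P := hsq (hb.sub hc)
  have hab : Integrable (fun ω => ‖a ω - b ω‖ ^ 2) P := hsq (ha.sub hb)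
  have hinner : ∀ ω, 2 * inner ℝ (a ω - c ω) (b ω - c ω)
      = (‖a ω - c ω‖ ^ 2 + ‖b ω - c ω‖ ^ 2) - ‖a ω - b ω‖ ^ 2 := fun ω => by
    have := norm_sub_sq_real (a ω - c ω) (b ω - c ω)
    rw [sub_sub_sub_cancel_right] at this
    linarith
  rw [← integral_const_mul, funext hinner,
    integral_sub (f := fun ω => ‖a ω - c ω‖ ^ 2 + ‖b ω - c ω‖ ^ 2) (hac.add hbc) hab,
    integral_add hac hbc]
  ring

theorem integral_inner_eq_sum_integral_mul {ι : Type*} [Fintype ι]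
    {a b : Ω → EuclideanSpace ℝ ι} (ha : MemLp a 2 P) (hb : MemLp b 2 P) :
    ∫ ω, inner ℝ (a ω) (b ω) ∂P = ∑ i, ∫ ω, a ω i * b ω i ∂P := by
  simp_rw [PiLp.inner_apply, RCLike.inner_apply, conj_trivial, mul_comm (b _ _)]
  exact integral_finsetSum _ fun i _ =>
    ((EuclideanSpace.proj (𝕜 := ℝ) i).comp_memLp' ha).integrable_mul
      ((EuclideanSpace.proj (𝕜 := ℝ) i).comp_memLp' hb)

theorem condExp_eval_ae_eq {ι : Type*} [Fintype ι] {x y : Ω → EuclideanSpace ℝ ι}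
    (hx : Integrable x P) (hcond : P[x|𝒢] =ᵐ[P] y) (i : ι) :
    P[fun ω => x ω i|𝒢] =ᵐ[P] fun ω => y ω i :=
  ((EuclideanSpace.proj (𝕜 := ℝ) i).comp_condExp_comm hx).symm.trans
    (hcond.fun_comp (EuclideanSpace.proj (𝕜 := ℝ) i))

theorem integral_mul_condExp_of_stronglyMeasurable [IsFiniteMeasure P] (h𝒢 : 𝒢 ≤ mΩ)
    {z u : Ω → ℝ} (hz𝒢 : StronglyMeasurable[𝒢] z) (hz : MemLp z 2 P) (hu : MemLp u 2 P) :
    ∫ ω, z ω * u ω ∂P = ∫ ω, z ω * (P[u|𝒢]) ω ∂P := by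
  rw [← integral_condExp h𝒢]
  exact integral_congr_ae
    (condExp_mul_of_stronglyMeasurable_left hz𝒢 (hz.integrable_mul hu) (hu.integrable one_le_two))

theorem integral_mul_condExp_of_condCov_eq_zero [IsFiniteMeasure P] (h𝒢 : 𝒢 ≤ mΩ)
    {G u : Ω → ℝ} (hG : MemLp G 2 P) (hu : MemLp u 2 P) (hcov : ∀ᵐ ω ∂P, condCov 𝒢 P G u ω = 0) :
    ∫ ω, G ω * u ω ∂P = ∫ ω, G ω * (P[u|𝒢]) ω ∂P :=
  calc ∫ ω, G ω * u ω ∂P = ∫ ω, (P[u|𝒢]) ω * (P[G|𝒢]) ω ∂P := by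
        rw [← integral_condExp h𝒢]
        refine integral_congr_ae ?_
        filter_upwards [hcov] with ω hω
        rw [condCov, sub_eq_zero] at hω
        rw [mul_comm]
        exact hω
    _ = ∫ ω, G ω * (P[u|𝒢]) ω ∂P := by
        simp_rw [mul_comm _ (P[u|𝒢] _)]
        exact (integral_mul_condExp_of_stronglyMeasurable h𝒢 stronglyMeasurable_condExp
          (hu.condExp one_le_two) hG).symm

theorem integral_sub_condExp_mul_sub_condExp_eq_zero [IsFiniteMeasure P] (h𝒢 : 𝒢 ≤ mΩ)
    {G u : Ω → ℝ} (hG : MemLp G 2 P) (hu : MemLp u 2 P)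
    (hcov : ∀ᵐ ω ∂P, condCov 𝒢 P G u ω = 0) :
    ∫ ω, (G ω - (P[u|𝒢]) ω) * (u ω - (P[u|𝒢]) ω) ∂P = 0 := by
  have hE : MemLp (P[u|𝒢]) 2 P := hu.condExp one_le_two
  have hGu : Integrable (fun ω => G ω * u ω) P := hG.integrable_mul hu
  have hGE : Integrable (fun ω => G ω * (P[u|𝒢]) ω) P := hG.integrable_mul hE
  have hEu : Integrable (fun ω => (P[u|𝒢]) ω * u ω) P := hE.integrable_mul hu
  have hEE : Integrable (fun ω => (P[u|𝒢]) ω * (P[u|𝒢]) ω) P := hE.integrable_mul hE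
  calc ∫ ω, (G ω - (P[u|𝒢]) ω) * (u ω - (P[u|𝒢]) ω) ∂P
      = (∫ ω, G ω * u ω ∂P - ∫ ω, G ω * (P[u|𝒢]) ω ∂P)
        - (∫ ω, (P[u|𝒢]) ω * u ω ∂P - ∫ ω, (P[u|𝒢]) ω * (P[u|𝒢]) ω ∂P) := by
        rw [← integral_sub hGu hGE, ← integral_sub hEu hEE, ← integral_sub]
        · congr 1 with ω
          ring
        · exact hGu.sub hGE
        · exact hEu.sub hEE
    _ = 0 := by
        rw [integral_mul_condExp_of_condCov_eq_zero h𝒢 hG hu hcov,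
          integral_mul_condExp_of_stronglyMeasurable h𝒢 stronglyMeasurable_condExp hE hu]
        ring

theorem condVar_ae_eq_condVar [IsFiniteMeasure P] (h𝒢 : 𝒢 ≤ mΩ) {u : Ω → ℝ}
    (hu : MemLp u 2 P) : condVar 𝒢 P u =ᵐ[P] ProbabilityTheory.condVar 𝒢 u P := by
  filter_upwards [ProbabilityTheory.condVar_ae_eq_condExp_sq_sub_sq_condExp h𝒢 hu] with ω hω
  rw [hω, Pi.sub_apply, sq, sq]
  rfl

theorem integral_condVar [IsFiniteMeasure P] (h𝒢 : 𝒢 ≤ mΩ) {u : Ω → ℝ} (hu : MemLp u 2 P) :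
    ∫ ω, condVar 𝒢 P u ω ∂P = ∫ ω, (u ω - (P[u|𝒢]) ω) ^ 2 ∂P := by
  rw [integral_congr_ae (condVar_ae_eq_condVar h𝒢 hu), ProbabilityTheory.condVar,
    integral_condExp h𝒢]
  rfl

theorem integral_sq_sub_condExp_le [IsProbabilityMeasure P] (h𝒢 : 𝒢 ≤ mΩ) {u : Ω → ℝ}
    (hu : MemLp u 2 P) {c : ℝ} (hvar : ∀ᵐ ω ∂P, condVar 𝒢 P u ω ≤ c) :
    ∫ ω, (u ω - (P[u|𝒢]) ω) ^ 2 ∂P ≤ c := by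
  have hint : Integrable (condVar 𝒢 P u) P :=
    ProbabilityTheory.integrable_condVar.congr (condVar_ae_eq_condVar h𝒢 hu).symm
  calc ∫ ω, (u ω - (P[u|𝒢]) ω) ^ 2 ∂P = ∫ ω, condVar 𝒢 P u ω ∂P :=
        (integral_condVar h𝒢 hu).symm
    _ ≤ ∫ _, c ∂P := integral_mono_ae hint (integrable_const c) hvar
    _ = c := by simp

theorem integral_sub_mul_sub_le_sqrt [IsProbabilityMeasure P] (h𝒢 : 𝒢 ≤ mΩ)
    {F G u v : Ω → ℝ} (hF : MemLp F 2 P) (hG : MemLp G 2 P) (hu : MemLp u 2 P)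
    (hcond : P[u|𝒢] =ᵐ[P] v)
    (hvar : ∀ᵐ ω ∂P, condVar 𝒢 P u ω ≤ 1) (hcov : ∀ᵐ ω ∂P, condCov 𝒢 P G u ω = 0) :
    ∫ ω, (F ω - v ω) * (u ω - v ω) ∂P ≤ √(∫ ω, (F ω - G ω) ^ 2 ∂P) := by
  set E := P[u|𝒢]
  have hE : MemLp E 2 P := hu.condExp one_le_two
  calc ∫ ω, (F ω - v ω) * (u ω - v ω) ∂P = ∫ ω, (F ω - E ω) * (u ω - E ω) ∂P :=
        integral_congr_ae (by filter_upwards [hcond] with ω hω; rw [hω])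
    _ = ∫ ω, (F ω - G ω) * (u ω - E ω) ∂P + ∫ ω, (G ω - E ω) * (u ω - E ω) ∂P := by
        rw [← integral_add]
        · congr 1 with ω
          ring
        · exact (hF.sub hG).integrable_mul (hu.sub hE)
        · exact (hG.sub hE).integrable_mul (hu.sub hE)
    _ = ∫ ω, (F ω - G ω) * (u ω - E ω) ∂P := by
        rw [integral_sub_condExp_mul_sub_condExp_eq_zero h𝒢 hG hu hcov, add_zero]
    _ ≤ √(∫ ω, (F ω - G ω) ^ 2 ∂P) * √(∫ ω, (u ω - E ω) ^ 2 ∂P) :=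
        integral_mul_le_sqrt_mul_sqrt (hF.sub hG) (hu.sub hE)
    _ ≤ √(∫ ω, (F ω - G ω) ^ 2 ∂P) := by
        refine mul_le_of_le_one_right (Real.sqrt_nonneg _) ?_
        exact Real.sqrt_le_one.mpr (integral_sq_sub_condExp_le h𝒢 hu hvar)

end

theorem Finset.card_mul_sum_eq_mul_sum_sum {ι : Type*} [Fintype ι] [DecidableEq ι]
    {𝒥 : Finset (Finset ι)} {k : ℕ} (hcount : ∀ i, k * #{J ∈ 𝒥 | i ∈ J} = #𝒥) (a : ι → ℝ) :
    #𝒥 * ∑ i, a i = k * ∑ J ∈ 𝒥, ∑ i ∈ J, a i := by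
  have hswap : ∑ J ∈ 𝒥, ∑ i ∈ J, a i = ∑ i, ∑ J ∈ 𝒥 with i ∈ J, a i :=
    Finset.sum_comm' fun J i => by simp [and_comm]
  have hcount' : ∀ i, (k : ℝ) * #{J ∈ 𝒥 | i ∈ J} = #𝒥 := fun i => by exact_mod_cast hcount i
  simp only [hswap, Finset.sum_const, nsmul_eq_mul, Finset.mul_sum, ← mul_assoc, hcount']

theorem Real.sum_sqrt_le_sqrt_card_mul_sqrt_sum {ι : Type*} (s : Finset ι) {b : ι → ℝ}
    (hb : ∀ i ∈ s, 0 ≤ b i) : ∑ i ∈ s, √(b i) ≤ √(#s) * √(∑ i ∈ s, b i) := by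
  have h := Real.sum_mul_le_sqrt_mul_sqrt s (fun _ => 1) (fun i => √(b i))
  simp only [one_mul, one_pow, Finset.sum_const, nsmul_eq_mul, mul_one] at h
  rwa [Finset.sum_congr rfl fun i hi => Real.sq_sqrt (hb i hi)] at h

theorem sum_le_of_le_sqrt_on_regular_cover {ι : Type*} [Fintype ι] [DecidableEq ι]
    {𝒥 : Finset (Finset ι)} (h𝒥 : 𝒥.Nonempty) {k n : ℕ} (hcard : ∀ J ∈ 𝒥, #J = n)
    (hcount : ∀ i, k * #{J ∈ 𝒥 | i ∈ J} = #𝒥) {a : ι → ℝ} {b : Finset ι → ι → ℝ}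
    (hb : ∀ J ∈ 𝒥, ∀ i ∈ J, 0 ≤ b J i) (hab : ∀ J ∈ 𝒥, ∀ i ∈ J, a i ≤ √(b J i)) :
    ∑ i, a i ≤ k * √n * (1 / #𝒥 * ∑ J ∈ 𝒥, √(∑ i ∈ J, b J i)) := by
  have hpos : (0 : ℝ) < #𝒥 := by exact_mod_cast h𝒥.card_pos
  calc ∑ i, a i = 1 / #𝒥 * (#𝒥 * ∑ i, a i) := by field_simp
    _ = 1 / #𝒥 * (k * ∑ J ∈ 𝒥, ∑ i ∈ J, a i) := by
        rw [Finset.card_mul_sum_eq_mul_sum_sum hcount]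
    _ ≤ 1 / #𝒥 * (k * ∑ J ∈ 𝒥, √n * √(∑ i ∈ J, b J i)) := by
        gcongr with J hJ
        calc ∑ i ∈ J, a i ≤ ∑ i ∈ J, √(b J i) := Finset.sum_le_sum (hab J hJ)
          _ ≤ √n * √(∑ i ∈ J, b J i) :=
              hcard J hJ ▸ Real.sum_sqrt_le_sqrt_card_mul_sqrt_sum J (hb J hJ)
    _ = k * √n * (1 / #𝒥 * ∑ J ∈ 𝒥, √(∑ i ∈ J, b J i)) := by
        rw [← Finset.mul_sum]
        ring

theorem supervised_loss_le_self_supervised_add_downsampled_invariance_general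
    {Ω : Type*} [mΩ : MeasurableSpace Ω] (P : Measure Ω) [IsProbabilityMeasure P]
    (m s n : ℕ) (hm : m = s ^ 2 * n)
    (x y : Ω → EuclideanSpace ℝ (Fin m))
    (hym : Measurable y)
    (hx : MemLp x 2 P) (hy : MemLp y 2 P)
    (hcond : condExpect (MeasurableSpace.comap y inferInstance) P x =ᵐ[P] y)
    (hvar : ∀ j : Fin m, ∀ᵐ ω ∂P,
      condVar (MeasurableSpace.comap y inferInstance) P (fun ω' => x ω' j) ω ≤ 1)
    (f : EuclideanSpace ℝ (Fin m) → EuclideanSpace ℝ (Fin m))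
    (hfx : MemLp (fun ω => f (x ω)) 2 P)
    (𝒥 : Finset (Finset (Fin m))) (h𝒥 : 𝒥.Nonempty)
    (hJcard : ∀ J ∈ 𝒥, J.card = n)
    (hJcount : ∀ j : Fin m, s ^ 2 * (𝒥.filter (fun J => j ∈ J)).card = 𝒥.card)
    (g : Finset (Fin m) → Fin m → Ω → ℝ)
    (hg : ∀ J ∈ 𝒥, ∀ j ∈ J, MemLp (g J j) 2 P)
    (hgcov : ∀ J ∈ 𝒥, ∀ j ∈ J, ∀ᵐ ω ∂P,
      condCov (MeasurableSpace.comap y inferInstance) P (g J j) (fun ω' => x ω' j) ω = 0) :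
    (∫ ω, ‖f (x ω) - y ω‖ ^ 2 ∂P) + ∫ ω, ‖x ω - y ω‖ ^ 2 ∂P ≤
      (∫ ω, ‖f (x ω) - x ω‖ ^ 2 ∂P) +
        2 * Real.sqrt ((m : ℝ) * s ^ 2) * ((1 / (𝒥.card : ℝ)) *
          ∑ J ∈ 𝒥, Real.sqrt (∫ ω, ∑ j ∈ J, (f (x ω) j - g J j ω) ^ 2 ∂P)) := by
  have hproj {w : Ω → EuclideanSpace ℝ (Fin m)} (hw : MemLp w 2 P) (j : Fin m) :
      MemLp (fun ω => w ω j) 2 P :=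
    (EuclideanSpace.proj (𝕜 := ℝ) j).comp_memLp' hw
  have hcross := sum_le_of_le_sqrt_on_regular_cover h𝒥 hJcard hJcount
    (a := fun j => ∫ ω, (f (x ω) - y ω) j * (x ω - y ω) j ∂P)
    (b := fun J j => ∫ ω, (f (x ω) j - g J j ω) ^ 2 ∂P)
    (fun _ _ _ _ => integral_nonneg fun _ => sq_nonneg _)
    (fun J hJ j hj => integral_sub_mul_sub_le_sqrt hym.comap_le (hproj hfx j) (hg J hJ j hj)
      (hproj hx j) (condExp_eval_ae_eq (hx.integrable one_le_two) hcond j) (hvar j)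
      (hgcov J hJ j hj))
  have hsum_integral : ∑ J ∈ 𝒥, √(∑ j ∈ J, ∫ ω, (f (x ω) j - g J j ω) ^ 2 ∂P)
      = ∑ J ∈ 𝒥, √(∫ ω, ∑ j ∈ J, (f (x ω) j - g J j ω) ^ 2 ∂P) :=
    Finset.sum_congr rfl fun J hJ => congrArg Real.sqrt
      (integral_finsetSum J fun j hj => ((hproj hfx j).sub (hg J hJ j hj)).integrable_sq).symm
  have hsqrt : √((m : ℝ) * s ^ 2) = ((s ^ 2 : ℕ) : ℝ) * √n := by
    rw [hm, Nat.cast_mul, Nat.cast_pow, mul_comm, ← mul_assoc, ← sq,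
      Real.sqrt_mul (by positivity), Real.sqrt_sq (by positivity)]
  rw [integral_norm_sub_sq_add_integral_norm_sub_sq hfx hx hy,
    integral_inner_eq_sum_integral_mul (a := fun ω => f (x ω) - y ω) (b := fun ω => x ω - y ω)
      (hfx.sub hy) (hx.sub hy), hsqrt, ← hsum_integral]
  linarith

/-- **Proposition 1 (downsampled invariance bound).** If `E[x | σ(y)] = y` a.s.,
`Var(xⱼ | σ(y)) ≤ 1` a.s. for every coordinate `j`, each `J ∈ 𝒥` has cardinality `n = m/s²`,
every index belongs to exactly `|𝒥|/s²` members of `𝒥`, and each `gᴶ` satisfies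
`Cov(gᴶⱼ, xⱼ | σ(y)) = 0` a.s. for every `j ∈ J`, then
`E‖f(x) − y‖² + E‖x − y‖² ≤ E‖f(x) − x‖²
  + 2·√(m·s²)·(1/|𝒥|)·Σ_{J∈𝒥} (E[Σ_{j∈J} (f(x)ⱼ − gᴶⱼ)²])^{1/2}`. -/
theorem supervised_loss_le_self_supervised_add_downsampled_invariance
    {Ω : Type*} [mΩ : MeasurableSpace Ω] (P : Measure Ω) [IsProbabilityMeasure P]
    (m s n : ℕ) (hs : 0 < s) (hn : 0 < n) (hm : m = s ^ 2 * n)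
    (x y : Ω → EuclideanSpace ℝ (Fin m))
    (hxm : Measurable x) (hym : Measurable y)
    (hx : MemLp x 2 P) (hy : MemLp y 2 P)
    (hcond : condExpect (MeasurableSpace.comap y inferInstance) P x =ᵐ[P] y)
    (hvar : ∀ j : Fin m, ∀ᵐ ω ∂P,
      condVar (MeasurableSpace.comap y inferInstance) P (fun ω' => x ω' j) ω ≤ 1)
    (f : EuclideanSpace ℝ (Fin m) → EuclideanSpace ℝ (Fin m)) (hf : Measurable f)
    (hfx : MemLp (fun ω => f (x ω)) 2 P)
    (𝒥 : Finset (Finset (Fin m))) (h𝒥 : 𝒥.Nonempty)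
    (hJcard : ∀ J ∈ 𝒥, J.card = n)
    (hJcount : ∀ j : Fin m, s ^ 2 * (𝒥.filter (fun J => j ∈ J)).card = 𝒥.card)
    (g : Finset (Fin m) → Fin m → Ω → ℝ)
    (hg : ∀ J ∈ 𝒥, ∀ j ∈ J, MemLp (g J j) 2 P)
    (hgcov : ∀ J ∈ 𝒥, ∀ j ∈ J, ∀ᵐ ω ∂P,
      condCov (MeasurableSpace.comap y inferInstance) P (g J j) (fun ω' => x ω' j) ω = 0) :
    (∫ ω, ‖f (x ω) - y ω‖ ^ 2 ∂P) + ∫ ω, ‖x ω - y ω‖ ^ 2 ∂P ≤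
      (∫ ω, ‖f (x ω) - x ω‖ ^ 2 ∂P) +
        2 * Real.sqrt ((m : ℝ) * s ^ 2) * ((1 / (𝒥.card : ℝ)) *
          ∑ J ∈ 𝒥, Real.sqrt (∫ ω, ∑ j ∈ J, (f (x ω) j - g J j ω) ^ 2 ∂P)) :=
  supervised_loss_le_self_supervised_add_downsampled_invariance_general (mΩ := mΩ) P m s n hm x y
    hym hx hy hcond hvar f hfx 𝒥 h𝒥 hJcard hJcount g hg hgcov
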